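/- arXiv:1302.6558 — 3 statements merged into one kernel-verified Lean document; each statement's English description precedes it below -/
import Mathlib

section
/- The map ψ defined on subexcedant sequences of length n by ψ(t_1 t_2 … t_n) = [[n,t_n]]·[[n−1,t_{n−1}]]·…·[[2,t_2]]·[[1,t_1]] is a bijection from the set of subexcedant sequences of length n onto the symmetric group S_n. -/
/-- `rot u k` is the permutation `[[u,k]]` of `{1,…,u} ⊆ ℕ` obtained by `k`
right circular shifts of the first `u` entries of the identity (positions are
1-based; all other natural numbers are fixed): `[[u,k]] i = u - k + i` for
`1 ≤ i ≤ k`, `[[u,k]] i = i - k` for `k < i ≤ u` and `[[u,k]] i = i` for `i > u`.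
It is (junk-)defined as the identity when `¬ k < u`. -/
def rot (u k : ℕ) : Equiv.Perm ℕ :=
  if _h : k < u then
    { toFun := fun i =>
        if 1 ≤ i ∧ i ≤ k then u - k + i
        else if k < i ∧ i ≤ u then i - k
        else i
      invFun := fun j =>
        if u - k + 1 ≤ j ∧ j ≤ u then j - (u - k)
        else if 1 ≤ j ∧ j ≤ u - k then j + k
        else j
      left_inv := by intro i; dsimp only; split_ifs <;> omega
      right_inv := by intro j; dsimp only; split_ifs <;> omega }
  else 1

/-- `psi n t = [[n, t n]] · [[n-1, t (n-1)]] · ⋯ · [[2, t 2]] · [[1, t 1]]`, where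
permutations act on indices, i.e. `(σ * τ) i = σ (τ i)`.  When `t` is a subexcedant
sequence of length `n`, `t` is called the McMahon code of the permutation `psi n t`. -/
def psi (n : ℕ) (t : ℕ → ℕ) : Equiv.Perm ℕ :=
  ((List.range n).reverse.map (fun i => rot (i + 1) (t (i + 1)))).prod

/-- `c` is a subexcedant sequence of length `n`: `0 ≤ c i ≤ i - 1` for `1 ≤ i ≤ n`
(positions are 1-based). -/
def Subexcedant (n : ℕ) (c : ℕ → ℕ) : Prop :=
  ∀ i, 1 ≤ i → i ≤ n → c i ≤ i - 1

/-- The major index of a permutation of `{1,…,n}`: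
`maj π = ∑_{1 ≤ i < n, π i > π (i+1)} i`. -/
def maj (n : ℕ) (π : Equiv.Perm ℕ) : ℕ :=
  ∑ i ∈ Finset.Ico 1 n, if π (i + 1) < π i then i else 0

/-! The factors `[[u, t_u]]` with `u < n` fix `n`, so `ψ(t)` sends `n` to `[[n, t_n]] n = n - t_n`:
the last letter of the code is read off from `π(n)`. Peeling off `[[n, t_n]]` leaves a permutation
fixing `n`, that is, an element of `S_{n-1}`, and both injectivity and surjectivity follow by
induction on `n`. -/

lemma Equiv.Perm.apply_mem_of_forall_not_mem {α : Type*} {π : Equiv.Perm α} {s : Set α}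
    (hπ : ∀ x ∉ s, π x = x) {x : α} (hx : x ∈ s) : π x ∈ s := by
  by_contra h
  rw [π.injective (hπ _ h)] at h
  exact h hx

lemma rot_apply_of_eq_zero_or_lt {u k i : ℕ} (h : i = 0 ∨ u < i) : rot u k i = i := by
  unfold rot
  split_ifs
  · simp only [Equiv.coe_fn_mk]
    split_ifs <;> omega
  · rfl

lemma rot_apply_self {u k : ℕ} (h : k < u) : rot u k u = u - k := by
  rw [rot, dif_pos h]
  simp only [Equiv.coe_fn_mk]
  split_ifs <;> omega

lemma Subexcedant.mono {m n : ℕ} {c : ℕ → ℕ} (hc : Subexcedant n c) (hmn : m ≤ n) :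
    Subexcedant m c :=
  fun i hi1 hi2 => hc i hi1 (hi2.trans hmn)

lemma Subexcedant.apply_succ_le {n : ℕ} {c : ℕ → ℕ} (hc : Subexcedant (n + 1) c) :
    c (n + 1) ≤ n :=
  hc (n + 1) n.succ_pos le_rfl

lemma psi_succ (n : ℕ) (t : ℕ → ℕ) :
    psi (n + 1) t = rot (n + 1) (t (n + 1)) * psi n t := by
  simp [psi, List.range_succ]

lemma psi_apply_of_eq_zero_or_lt (n : ℕ) (t : ℕ → ℕ) {i : ℕ} (h : i = 0 ∨ n < i) :
    psi n t i = i := by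
  induction n with
  | zero => simp [psi]
  | succ m ih =>
    rw [psi_succ, Equiv.Perm.mul_apply, ih (by omega), rot_apply_of_eq_zero_or_lt (by omega)]

lemma psi_congr (n : ℕ) {t s : ℕ → ℕ} (h : ∀ i, 1 ≤ i → i ≤ n → t i = s i) :
    psi n t = psi n s := by
  induction n with
  | zero => rfl
  | succ m ih =>
    rw [psi_succ, psi_succ, h (m + 1) m.succ_pos le_rfl,
      ih fun i h1 h2 => h i h1 (by omega)]

lemma psi_succ_apply_succ (n : ℕ) {t : ℕ → ℕ} (h : t (n + 1) ≤ n) :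
    psi (n + 1) t (n + 1) = n + 1 - t (n + 1) := by
  rw [psi_succ, Equiv.Perm.mul_apply, psi_apply_of_eq_zero_or_lt n t (by omega),
    rot_apply_self (by omega)]

lemma eq_of_psi_eq {n : ℕ} {t s : ℕ → ℕ} (ht : Subexcedant n t) (hs : Subexcedant n s)
    (h : psi n t = psi n s) : ∀ i, 1 ≤ i → i ≤ n → t i = s i := by
  induction n with
  | zero => omega
  | succ m ih =>
    have htop : t (m + 1) = s (m + 1) := by
      have ht' := psi_succ_apply_succ m ht.apply_succ_le
      have hs' := psi_succ_apply_succ m hs.apply_succ_le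
      rw [h] at ht'
      have := ht.apply_succ_le
      have := hs.apply_succ_le
      omega
    have hrest : psi m t = psi m s := by
      rw [psi_succ, psi_succ, htop] at h
      exact mul_left_cancel h
    intro i hi1 hi2
    rcases Nat.lt_or_ge i (m + 1) with hi | hi
    · exact ih (ht.mono m.le_succ) (hs.mono m.le_succ) hrest i hi1 (by omega)
    · rwa [le_antisymm hi2 hi]

lemma exists_psi_eq (n : ℕ) (π : Equiv.Perm ℕ) (hπ : ∀ i, i = 0 ∨ n < i → π i = i) :
    ∃ c, Subexcedant n c ∧ (∀ i, i = 0 ∨ n < i → c i = 0) ∧ psi n c = π := by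
  induction n generalizing π with
  | zero =>
    refine ⟨fun _ => 0, fun i _ _ => by omega, fun _ _ => rfl, ?_⟩
    exact Equiv.ext fun i => (hπ i (by omega)).symm
  | succ m ih =>
    obtain ⟨hπ1, hπ2⟩ : π (m + 1) ∈ Set.Icc 1 (m + 1) :=
      π.apply_mem_of_forall_not_mem (fun i hi => hπ i (by rw [Set.mem_Icc] at hi; omega)) (by simp)
    set k := m + 1 - π (m + 1)
    have hk : k < m + 1 := by omega
    have hσ : ∀ i, i = 0 ∨ m < i → ((rot (m + 1) k)⁻¹ * π) i = i := by
      intro i hi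
      rw [Equiv.Perm.mul_apply, Equiv.Perm.inv_eq_iff_eq]
      by_cases him : i = m + 1
      · subst him
        rw [rot_apply_self hk]
        omega
      · rw [hπ i (by omega), rot_apply_of_eq_zero_or_lt (by omega)]
    obtain ⟨c, hc, hc0, hψ⟩ := ih _ hσ
    refine ⟨Function.update c (m + 1) k, fun i hi1 hi2 => ?_, fun i hi => ?_, ?_⟩
    · rcases eq_or_ne i (m + 1) with rfl | hi
      · simp only [Function.update_self]; omega
      · rw [Function.update_of_ne hi]
        exact hc i hi1 (by omega)
    · rw [Function.update_of_ne (by omega)]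
      exact hc0 i (by omega)
    · have hlow : psi m (Function.update c (m + 1) k) = psi m c :=
        psi_congr m fun i _ hi => Function.update_of_ne (by omega) _ _
      rw [psi_succ, hlow, Function.update_self, hψ, mul_inv_cancel_left]

/-- the map `ψ` is a bijection from the set of subexcedant
sequences of length `n` (encoded as functions `ℕ → ℕ` that vanish outside the
positions `1,…,n`) onto the symmetric group `S_n` (encoded as the set of
permutations of `ℕ` fixing every point outside `{1,…,n}`). -/
theorem psi_bijective (n : ℕ) :
    Set.BijOn (psi n)
      {c : ℕ → ℕ | Subexcedant n c ∧ ∀ i, i = 0 ∨ n < i → c i = 0}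
      {π : Equiv.Perm ℕ | ∀ i, i = 0 ∨ n < i → π i = i} := by
  refine ⟨fun c _ i hi => psi_apply_of_eq_zero_or_lt n c hi, ?_, ?_⟩
  · rintro t ⟨ht, ht0⟩ s ⟨hs, hs0⟩ h
    funext i
    by_cases hi : i = 0 ∨ n < i
    · rw [ht0 i hi, hs0 i hi]
    · exact eq_of_psi_eq ht hs h i (by omega) (by omega)
  · intro π hπ
    obtain ⟨c, hc, hc0, rfl⟩ := exists_psi_eq n π hπ
    exact ⟨c, ⟨hc, hc0⟩, rfl⟩
end

section
/- For every subexcedant sequence t = t_1 t_2 … t_n of length n, the major index of the permutation ψ(t) = [[n,t_n]]·[[n−1,t_{n−1}]]·…·[[1,t_1]] equals the weight of t, that is, maj ψ(t) = Σ_{i=1}^n t_i. -/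
lemma rot_apply {u k : ℕ} (hk : k < u) (i : ℕ) :
    rot u k i = if 1 ≤ i ∧ i ≤ k then u - k + i
      else if k < i ∧ i ≤ u then i - k else i := by
  simp only [rot, dif_pos hk, Equiv.coe_fn_mk]

lemma tele (g : ℕ → ℕ) : ∀ N : ℕ,
    (∑ i ∈ Finset.Ico 1 (N + 1), i * g (i + 1)) + ∑ j ∈ Finset.Icc 1 (N + 1), g j
      = ∑ j ∈ Finset.Icc 1 (N + 1), j * g j := by
  intro N
  induction N with
  | zero => simp
  | succ N ih =>
    rw [Finset.sum_Ico_succ_top (by omega : 1 ≤ N + 1),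
        Finset.sum_Icc_succ_top (by omega : 1 ≤ N + 2),
        Finset.sum_Icc_succ_top (by omega : 1 ≤ N + 2)]
    have h : (N + 2) * g (N + 2) = (N + 1) * g (N + 2) + g (N + 2) := by ring
    rw [h]
    linarith [ih]

lemma count_ind : ∀ n k : ℕ, k ≤ n →
    (∑ j ∈ Finset.Ico 1 (n + 1), if 1 ≤ j ∧ j ≤ k then 1 else 0) = k := by
  intro n
  induction n with
  | zero => intro k hk; interval_cases k; simp
  | succ n ih =>
    intro k hk
    rw [Finset.sum_Ico_succ_top (by omega : 1 ≤ n + 1)]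
    rcases Nat.lt_or_ge k (n + 1) with h | h
    · rw [ih k (by omega), if_neg (by omega)]
      omega
    · have hk1 : k = n + 1 := by omega
      subst hk1
      rw [if_pos (by omega)]
      have : (∑ j ∈ Finset.Ico 1 (n + 1), if 1 ≤ j ∧ j ≤ n + 1 then 1 else 0)
          = ∑ j ∈ Finset.Ico 1 (n + 1), 1 := by
        refine Finset.sum_congr rfl fun j hj => ?_
        simp only [Finset.mem_Ico] at hj
        rw [if_pos (by omega)]
      rw [this, Finset.sum_const, Nat.Ico_eq_range', smul_eq_mul]
      simp

lemma maj_step (n k : ℕ) (σ : Equiv.Perm ℕ) (hk : k ≤ n)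
    (hfix : ∀ m, n < m ∨ m = 0 → σ m = m) :
    maj (n + 1) (rot (n + 1) k * σ) = maj n σ + k := by
  rcases Nat.eq_zero_or_pos n with rfl | hn
  · have hk0 : k = 0 := by omega
    subst hk0
    simp [maj]
  have hmem : ∀ i, 1 ≤ i → i ≤ n → 1 ≤ σ i ∧ σ i ≤ n := by
    intro i h1 h2
    constructor
    · by_contra h
      have h0 : σ 0 = 0 := hfix 0 (Or.inr rfl)
      have : σ i = σ 0 := by omega
      have := σ.injective this
      omega
    · by_contra h
      push_neg at h
      have h2' : σ (σ i) = σ i := hfix _ (Or.inl h)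
      have := σ.injective h2'
      omega
  have hσtop : σ (n + 1) = n + 1 := hfix (n + 1) (Or.inl (by omega))
  set c : ℕ → ℕ := fun i => if 1 ≤ σ i ∧ σ i ≤ k then 1 else 0 with hc
  have hcn1 : c (n + 1) = 0 := by
    simp only [hc, hσtop]
    rw [if_neg (by omega)]
  -- pointwise key identity
  have key : ∀ i ∈ Finset.Ico 1 (n + 1),
      ((if (rot (n + 1) k * σ) (i + 1) < (rot (n + 1) k * σ) i then i else 0) + i * c (i + 1))
        = (if σ (i + 1) < σ i then i else 0) + i * c i := by
    intro i hi
    simp only [Finset.mem_Ico] at hi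
    have ha := hmem i hi.1 (by omega)
    have hb : 1 ≤ σ (i + 1) ∧ σ (i + 1) ≤ n + 1 := by
      rcases Nat.lt_or_ge (i + 1) (n + 1) with h | h
      · have := hmem (i + 1) (by omega) (by omega); omega
      · have hi1 : i + 1 = n + 1 := by omega
        rw [hi1, hσtop]; omega
    have hne : σ (i + 1) ≠ σ i := by
      intro h
      have := σ.injective h
      omega
    simp only [Equiv.Perm.mul_apply, rot_apply (show k < n + 1 by omega), hc]
    split_ifs <;> omega
  have hsum := Finset.sum_congr rfl key
  rw [Finset.sum_add_distrib, Finset.sum_add_distrib] at hsum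
  have hcount : (∑ i ∈ Finset.Ico 1 (n + 1), c i) = k := by
    have hbij : ∀ i : ℕ, i ∈ Finset.Ico 1 (n + 1) ↔ σ i ∈ Finset.Ico 1 (n + 1) := by
      intro i
      simp only [Finset.mem_Ico]
      constructor
      · intro h
        have := hmem i h.1 (by omega)
        omega
      · intro h
        by_contra h'
        push_neg at h'
        have : σ i = i := hfix i (by omega)
        omega
    have heq : (∑ i ∈ Finset.Ico 1 (n + 1), c i)
        = ∑ j ∈ Finset.Ico 1 (n + 1), if 1 ≤ j ∧ j ≤ k then 1 else 0 :=
      Finset.sum_equiv (σ : ℕ ≃ ℕ) hbij (fun i _ => rfl)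
    rw [heq, count_ind n k hk]
  have htele := tele c n
  rw [show Finset.Icc 1 (n + 1) = Finset.Ico 1 (n + 2) from (Finset.Ico_add_one_right_eq_Icc 1 (n+1)).symm,
      Finset.sum_Ico_succ_top (by omega : 1 ≤ n + 1),
      Finset.sum_Ico_succ_top (by omega : 1 ≤ n + 1), hcn1, hcount] at htele
  have htop : (∑ i ∈ Finset.Ico 1 (n + 1), if σ (i + 1) < σ i then i else 0) = maj n σ := by
    rw [Finset.sum_Ico_succ_top (by omega : 1 ≤ n), hσtop]
    have hσn := hmem n (by omega) le_rfl
    rw [if_neg (by omega)]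
    rfl
  rw [htop] at hsum
  simp only [maj] at hsum ⊢
  omega


lemma rot_fix {u k i : ℕ} (h : u < i ∨ i = 0) : rot u k i = i := by
  by_cases hk : k < u
  · rw [rot_apply hk]; split_ifs <;> omega
  · simp [rot, dif_neg hk]

lemma psi_fix (n : ℕ) (t : ℕ → ℕ) : ∀ {m : ℕ}, (n < m ∨ m = 0) → psi n t m = m := by
  induction n with
  | zero => intro m _; simp [psi]
  | succ n ih =>
    intro m hm
    rw [psi_succ, Equiv.Perm.mul_apply, ih (by omega), rot_fix (by omega)]

/-- for every subexcedant sequence `t` of length `n`,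
`maj (ψ t) = ∑_{i=1}^n t i` (the weight of `t`). -/
theorem maj_psi_eq_weight (n : ℕ) (t : ℕ → ℕ) (ht : Subexcedant n t) :
    maj n (psi n t) = ∑ i ∈ Finset.Icc 1 n, t i := by
  induction n with
  | zero => simp [maj, psi]
  | succ n ih =>
    have hk : t (n + 1) ≤ n := by
      have := ht (n + 1) (by omega) le_rfl
      omega
    have ht' : Subexcedant n t := fun i h1 h2 => ht i h1 (by omega)
    rw [psi_succ, maj_step n (t (n + 1)) (psi n t) hk (fun m hm => psi_fix n t hm),
        ih ht', Finset.sum_Icc_succ_top (by omega : 1 ≤ n + 1)]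
end

section
/- Let n and k be integers with 0 < k ≤ n(n−1)/2, let j = min{s : s(s−1)/2 ≥ k}, and let a = a_1 a_2 … a_n be the subexcedant sequence with a_i = i−1 for 1 ≤ i ≤ j−1, a_j = k − (j−1)(j−2)/2, and a_i = 0 for i > j. Then the permutation α = ψ(a) ∈ S_n with McMahon code a is an involution, i.e., α^{−1} = α. -/
/-!
Since `a i = i - 1` for `i < j`, the product `[[j-1, j-2]] ⋯ [[1, 0]]` reverses `{1, …, j-1}`;
composed with `[[j, m]]`, `m < j`, it reverses instead the two disjoint blocks `{1, …, j-m-1}`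
and `{j-m, …, j}`. The factors `[[i, 0]]` with `i > j` are trivial, so `ψ(a)` is a product of
commuting involutions.
-/

def revIcc (l r : ℕ) : Equiv.Perm ℕ :=
  Function.Involutive.toPerm (fun x => if l ≤ x ∧ x ≤ r then l + r - x else x)
    (by intro x; dsimp only; split_ifs <;> omega)

lemma revIcc_apply (l r x : ℕ) :
    revIcc l r x = if l ≤ x ∧ x ≤ r then l + r - x else x := rfl

lemma revIcc_inv (l r : ℕ) : (revIcc l r)⁻¹ = revIcc l r :=
  Function.Involutive.toPerm_symm _

lemma revIcc_disjoint {l r l' r' : ℕ} (h : r < l') :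
    (revIcc l r).Disjoint (revIcc l' r') := by
  intro x
  simp only [revIcc_apply]
  split_ifs <;> omega

lemma inv_mul_eq_self_of_commute {G : Type*} [Group G] {g h : G} (hg : g⁻¹ = g) (hh : h⁻¹ = h)
    (hgh : Commute g h) : (g * h)⁻¹ = g * h := by
  rw [mul_inv_rev, hg, hh, hgh.eq]

lemma rot_apply_of_lt {u k : ℕ} (h : k < u) (i : ℕ) :
    rot u k i = if 1 ≤ i ∧ i ≤ k then u - k + i else if k < i ∧ i ≤ u then i - k else i := by
  rw [rot, dif_pos h]
  rfl

lemma rot_of_le {u k : ℕ} (h : u ≤ k) : rot u k = 1 :=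
  dif_neg (by omega)

lemma rot_zero (u : ℕ) : rot u 0 = 1 := by
  rcases Nat.eq_zero_or_pos u with rfl | hu
  · exact rot_of_le le_rfl
  · ext i
    rw [rot_apply_of_lt hu]
    split_ifs <;> simp only [Equiv.Perm.coe_one, id_eq] <;> omega

lemma rot_mul_revIcc {u m : ℕ} (h : m ≤ u) :
    rot (u + 1) m * revIcc 1 u = revIcc 1 (u - m) * revIcc (u + 1 - m) (u + 1) := by
  ext x
  simp only [Equiv.Perm.mul_apply, rot_apply_of_lt (Nat.lt_succ_of_le h), revIcc_apply]
  split_ifs <;> omega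

lemma psi_zero (t : ℕ → ℕ) : psi 0 t = 1 := rfl

lemma psi_eq_of_le {t : ℕ → ℕ} {j n : ℕ} (hjn : j ≤ n) (ht : ∀ i, j < i → t i = 0) :
    psi n t = psi j t := by
  induction n, hjn using Nat.le_induction with
  | base => rfl
  | succ n hjn ih => rw [psi_succ, ht (n + 1) (by omega), rot_zero, one_mul, ih]

lemma psi_eq_revIcc {t : ℕ → ℕ} {u : ℕ} (ht : ∀ i, 1 ≤ i → i ≤ u → t i = i - 1) :
    psi u t = revIcc 1 u := by
  induction u with
  | zero => ext x; rw [psi_zero, Equiv.Perm.one_apply, revIcc_apply, if_neg (by omega)]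
  | succ u ih =>
    rw [psi_succ, ih fun i h1 h2 => ht i h1 (by omega), ht (u + 1) (by omega) le_rfl,
      rot_mul_revIcc (by omega)]
    ext x
    simp only [Equiv.Perm.mul_apply, revIcc_apply]
    split_ifs <;> omega

lemma inv_psi_succ_eq_self {t : ℕ → ℕ} {u : ℕ} (ht : ∀ i, 1 ≤ i → i ≤ u → t i = i - 1) :
    (psi (u + 1) t)⁻¹ = psi (u + 1) t := by
  rw [psi_succ, psi_eq_revIcc ht]
  by_cases hm : t (u + 1) ≤ u
  · rw [rot_mul_revIcc hm]
    exact inv_mul_eq_self_of_commute (revIcc_inv _ _) (revIcc_inv _ _)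
      (revIcc_disjoint (by omega)).commute
  · rw [rot_of_le (by omega), one_mul, revIcc_inv]

theorem psi_of_colex_smallest_involution_general (n j : ℕ) (a : ℕ → ℕ)
    (ha1 : ∀ i, 1 ≤ i → i ≤ j - 1 → a i = i - 1)
    (ha3 : ∀ i, j < i → a i = 0) :
    (psi n a)⁻¹ = psi n a := by
  rcases lt_or_ge n j with hnj | hjn
  · rw [psi_eq_revIcc fun i h1 h2 => ha1 i h1 (by omega), revIcc_inv]
  · rw [psi_eq_of_le hjn ha3]
    cases j with
    | zero => rw [psi_zero, inv_one]
    | succ u => exact inv_psi_succ_eq_self ha1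

/-- for `0 < k ≤ n(n-1)/2`, with `j = min {s : s(s-1)/2 ≥ k}` and `a`
the smallest (in co-lex order) subexcedant sequence in `S(k,n)`, i.e. `a i = i - 1`
for `1 ≤ i ≤ j-1`, `a j = k - (j-1)(j-2)/2` and `a i = 0` for `i > j`, the
permutation `α = ψ(a)` with McMahon code `a` is an involution: `α⁻¹ = α`. -/
theorem psi_of_colex_smallest_involution (n k j : ℕ) (a : ℕ → ℕ)
    (hk0 : 0 < k) (hkn : k ≤ n * (n - 1) / 2)
    (hj : j = sInf {s : ℕ | k ≤ s * (s - 1) / 2})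
    (ha1 : ∀ i, 1 ≤ i → i ≤ j - 1 → a i = i - 1)
    (ha2 : a j = k - (j - 1) * (j - 2) / 2)
    (ha3 : ∀ i, j < i → a i = 0) :
    (psi n a)⁻¹ = psi n a :=
  psi_of_colex_smallest_involution_general n j a ha1 ha3
end
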